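/- Two connected components of an ambient wedge intersected with AdS: the set S := {x ∈ AdS : x₁ > |x₀|} is the disjoint union of W_R := {x ∈ AdS : x₁ > |x₀|, x_n > 0} and W̃_R′ := {x ∈ AdS : x₁ > |x₀|, x_n < 0}; in particular no point x ∈ AdS satisfies both x₁ > |x₀| and x_n = 0. Moreover W_R and W̃_R′ are nonempty, open in AdS (subspace topology), and each is connected; consequently S has exactly two connected components, namely W_R and W̃_R′. -/

import Mathlib

open Matrix NormedSpace

/-- The diagonal entries of the metric `g = diag(1, −1, …, −1, 1)` on `ℝ^{n+1}`. -/
def eta (n : ℕ) (i : Fin (n + 1)) : ℝ := if i = 0 ∨ i = Fin.last n then 1 else -1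

/-- The ambient bilinear form `x·y = x₀y₀ − x₁y₁ − ⋯ − x_{n−1}y_{n−1} + x_ny_n`. -/
def mdot (n : ℕ) (x y : Fin (n + 1) → ℝ) : ℝ := ∑ i, eta n i * x i * y i

/-- Anti–de Sitter space: the quadric `{x ∈ ℝ^{n+1} : x·x = 1}`. -/
def AdS (n : ℕ) : Set (Fin (n + 1) → ℝ) := {x | mdot n x x = 1}

/-- The right wedge `W_R = {x ∈ AdS : x₁ > |x₀|, xₙ > 0}`. -/
def WR (n : ℕ) : Set (Fin (n + 1) → ℝ) :=
  {x | x ∈ AdS n ∧ |x 0| < x 1 ∧ 0 < x (Fin.last n)}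

/-- The opposite wedge `W_R′ = {x ∈ AdS : −x₁ > |x₀|, xₙ > 0}`. -/
def WRp (n : ℕ) : Set (Fin (n + 1) → ℝ) :=
  {x | x ∈ AdS n ∧ |x 0| < -x 1 ∧ 0 < x (Fin.last n)}

/-- The conjugate wedge `W̃_R = {x ∈ AdS : −x₁ > |x₀|, xₙ < 0}`. -/
def WtR (n : ℕ) : Set (Fin (n + 1) → ℝ) :=
  {x | x ∈ AdS n ∧ |x 0| < -x 1 ∧ x (Fin.last n) < 0}

/-- The conjugate opposite wedge `W̃_R′ = {x ∈ AdS : x₁ > |x₀|, xₙ < 0}`. -/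
def WtRp (n : ℕ) : Set (Fin (n + 1) → ℝ) :=
  {x | x ∈ AdS n ∧ |x 0| < x 1 ∧ x (Fin.last n) < 0}

/-- The matrix unit `E_{μν}`. -/
noncomputable def E (n : ℕ) (μ ν : Fin (n + 1)) : Matrix (Fin (n + 1)) (Fin (n + 1)) ℝ :=
  Matrix.single μ ν 1

/-! On `AdS` we have `x_n² = 1 − (x₀² − x₁² − ⋯ − x_{n−1}²)`, and on the ambient wedge
`|x₀| < x₁` the bracket is negative, so `x_n ≠ 0` there and the wedge splits into the parts
`x_n > 0` and `x_n < 0`. Each part is the graph `x_n = ±√(1 − (x₀² − x₁² − ⋯))` over the open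
convex cone `|x₀| < x₁`, hence connected; two disjoint relatively open connected pieces are
exactly the connected components. -/

open Set

lemma eta_castSucc (n : ℕ) (i : Fin n) :
    eta n i.castSucc = if i.castSucc = 0 then 1 else -1 := by
  simp [eta, (Fin.castSucc_lt_last i).ne]

def mdotInit (n : ℕ) (x : Fin (n + 1) → ℝ) : ℝ :=
  ∑ i : Fin n, eta n i.castSucc * x i.castSucc * x i.castSucc

lemma mdot_self_eq (n : ℕ) (x : Fin (n + 1) → ℝ) :
    mdot n x x = mdotInit n x + x (Fin.last n) ^ 2 := by
  simp [mdot, Fin.sum_univ_castSucc, eta, mdotInit, sq]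

lemma mdotInit_le (n : ℕ) (hn : 2 ≤ n) (x : Fin (n + 1) → ℝ) :
    mdotInit n x ≤ x 0 ^ 2 - x 1 ^ 2 := by
  obtain ⟨m, rfl⟩ : ∃ m, n = m + 2 := ⟨n - 2, by omega⟩
  have hrest : ∑ i : Fin m, eta (m + 2) i.succ.succ.castSucc * x i.succ.succ.castSucc *
      x i.succ.succ.castSucc ≤ 0 :=
    Finset.sum_nonpos fun i _ => by
      rw [eta_castSucc, if_neg (Fin.castSucc_ne_zero_iff.mpr (Fin.succ_ne_zero _))]
      nlinarith [mul_self_nonneg (x i.succ.succ.castSucc)]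
  rw [mdotInit, Fin.sum_univ_succ, Fin.sum_univ_succ]
  have eta_zero : eta (m + 2) 0 = 1 := by simp [eta]
  have eta_one : eta (m + 2) 1 = -1 := by simp [eta, Fin.ext_iff]
  simp only [Fin.succ_zero_eq_one, Fin.castSucc_zero, Fin.castSucc_one, eta_zero, eta_one]
  nlinarith

lemma mdotInit_neg (n : ℕ) (hn : 2 ≤ n) {x : Fin (n + 1) → ℝ} (hx : |x 0| < x 1) :
    mdotInit n x < 0 := by
  nlinarith [mdotInit_le n hn x, sq_abs (x 0), abs_nonneg (x 0)]

lemma last_ne_zero_of_mem_AdS (n : ℕ) (hn : 2 ≤ n) {x : Fin (n + 1) → ℝ} (hx : x ∈ AdS n)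
    (h : |x 0| < x 1) : x (Fin.last n) ≠ 0 := by
  intro h0
  have : mdot n x x = 1 := hx
  rw [mdot_self_eq, h0] at this
  linarith [mdotInit_neg n hn h]

def ambientWedge (n : ℕ) : Set (Fin (n + 1) → ℝ) := {x | |x 0| < x 1}

lemma isOpen_ambientWedge (n : ℕ) : IsOpen (ambientWedge n) :=
  isOpen_lt (by fun_prop) (by fun_prop)

lemma convex_ambientWedge (n : ℕ) : Convex ℝ (ambientWedge n) := by
  have hlin : ∀ c : ℝ, IsLinearMap ℝ fun x : Fin (n + 1) → ℝ => c * x 0 - x 1 := fun c =>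
    ⟨fun x y => by simp only [Pi.add_apply]; ring,
      fun a x => by simp only [Pi.smul_apply, smul_eq_mul]; ring⟩
  have : ambientWedge n = {x | 1 * x 0 - x 1 < 0} ∩ {x | -1 * x 0 - x 1 < 0} := by
    ext x
    simp only [ambientWedge, abs_lt, mem_inter_iff, mem_ofPred_eq]
    constructor <;> intro h <;> constructor <;> linarith [h.1, h.2]
  rw [this]
  exact (convex_halfSpace_lt (hlin 1) 0).inter (convex_halfSpace_lt (hlin (-1)) 0)

lemma ambientWedge_nonempty (n : ℕ) (hn : n ≠ 0) : (ambientWedge n).Nonempty := by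
  refine ⟨Pi.single 1 1, ?_⟩
  have h01 : (0 : Fin (n + 1)) ≠ 1 := by simp [Fin.ext_iff, hn]
  simp [ambientWedge, h01]

lemma mdotInit_update_last (n : ℕ) (x : Fin (n + 1) → ℝ) (a : ℝ) :
    mdotInit n (Function.update x (Fin.last n) a) = mdotInit n x := by
  simp [mdotInit, (Fin.castSucc_lt_last _).ne]

noncomputable def sheet (n : ℕ) (σ : ℝ) (x : Fin (n + 1) → ℝ) : Fin (n + 1) → ℝ :=
  Function.update x (Fin.last n) (σ * √(1 - mdotInit n x))

lemma continuous_mdotInit (n : ℕ) : Continuous (mdotInit n) := by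
  unfold mdotInit; fun_prop

lemma continuous_sheet (n : ℕ) (σ : ℝ) : Continuous (sheet n σ) :=
  continuous_id.update _ (continuous_const.mul (continuous_const.sub (continuous_mdotInit n)).sqrt)

lemma mdot_self_sheet (n : ℕ) {σ : ℝ} (hσ : σ ^ 2 = 1) {x : Fin (n + 1) → ℝ}
    (hx : mdotInit n x ≤ 1) : mdot n (sheet n σ x) (sheet n σ x) = 1 := by
  rw [mdot_self_eq, sheet, mdotInit_update_last, Function.update_self, mul_pow, hσ, one_mul,
    Real.sq_sqrt (by linarith)]
  ring

lemma sheet_mem_ambientWedge (n : ℕ) (hn : 2 ≤ n) (σ : ℝ) {x : Fin (n + 1) → ℝ}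
    (hx : x ∈ ambientWedge n) : sheet n σ x ∈ ambientWedge n := by
  have h0 : (0 : Fin (n + 1)) ≠ Fin.last n := by simp [Fin.ext_iff]; omega
  have h1 : (1 : Fin (n + 1)) ≠ Fin.last n := by
    simp [Fin.ext_iff, Nat.mod_eq_of_lt (show 1 < n + 1 by omega)]; omega
  simpa [ambientWedge, sheet, Function.update_of_ne h0, Function.update_of_ne h1] using hx

lemma sheet_image (n : ℕ) (hn : 2 ≤ n) {σ : ℝ} (hσ : σ ^ 2 = 1) :
    sheet n σ '' ambientWedge n = AdS n ∩ ambientWedge n ∩ {y | 0 < σ * y (Fin.last n)} := by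
  ext y
  constructor
  · rintro ⟨x, hx, rfl⟩
    have hq := mdotInit_neg n hn hx
    refine ⟨⟨mdot_self_sheet n hσ (by linarith), sheet_mem_ambientWedge n hn σ hx⟩, ?_⟩
    show 0 < σ * (sheet n σ x) (Fin.last n)
    rw [sheet, Function.update_self, ← mul_assoc, ← sq, hσ, one_mul]
    exact Real.sqrt_pos.mpr (by linarith)
  · rintro ⟨⟨hy, hyW⟩, hσy⟩
    refine ⟨y, hyW, Function.update_eq_self_iff.mpr ?_⟩
    have hq : 1 - mdotInit n y = y (Fin.last n) ^ 2 := by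
      have : mdot n y y = 1 := hy
      rw [mdot_self_eq] at this
      linarith
    have hsqrt : √(y (Fin.last n) ^ 2) = σ * y (Fin.last n) := by
      rw [← Real.sqrt_sq hσy.le, mul_pow, hσ, one_mul]
    rw [hq, hsqrt, ← mul_assoc, ← sq, hσ, one_mul]

lemma WR_eq_inter (n : ℕ) : WR n = AdS n ∩ ambientWedge n ∩ {x | 0 < x (Fin.last n)} := by
  ext x; exact and_assoc.symm

lemma WtRp_eq_inter (n : ℕ) : WtRp n = AdS n ∩ ambientWedge n ∩ {x | x (Fin.last n) < 0} := by
  ext x; exact and_assoc.symm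

lemma isConnected_AdS_inter_ambientWedge_inter (n : ℕ) (hn : 2 ≤ n) {σ : ℝ} (hσ : σ ^ 2 = 1) :
    IsConnected (AdS n ∩ ambientWedge n ∩ {y | 0 < σ * y (Fin.last n)}) :=
  sheet_image n hn hσ ▸ ((convex_ambientWedge n).isConnected
    (ambientWedge_nonempty n (by omega))).image _ (continuous_sheet n σ).continuousOn

lemma isConnected_WR (n : ℕ) (hn : 2 ≤ n) : IsConnected (WR n) := by
  simpa only [one_mul, ← WR_eq_inter] using
    isConnected_AdS_inter_ambientWedge_inter n hn (one_pow 2)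

lemma isConnected_WtRp (n : ℕ) (hn : 2 ≤ n) : IsConnected (WtRp n) := by
  simpa only [neg_one_mul, neg_pos, ← WtRp_eq_inter] using
    isConnected_AdS_inter_ambientWedge_inter n hn neg_one_sq

theorem connectedComponentIn_eq_inter_of_isPreconnected {X : Type*} [TopologicalSpace X]
    {S U V : Set X} (hU : IsOpen U) (hV : IsOpen V) (hUV : Disjoint U V) (hS : S ⊆ U ∪ V)
    (hSU : IsPreconnected (S ∩ U)) {x : X} (hx : x ∈ S ∩ U) :
    connectedComponentIn S x = S ∩ U :=
  Subset.antisymm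
    (subset_inter (connectedComponentIn_subset S x)
      (isPreconnected_connectedComponentIn.subset_left_of_subset_union hU hV hUV
        ((connectedComponentIn_subset S x).trans hS) ⟨x, mem_connectedComponentIn hx.1, hx.2⟩))
    (hSU.subset_connectedComponentIn hx inter_subset_left)

theorem connectedComponentIn_eq_inter_or_eq_inter {X : Type*} [TopologicalSpace X]
    {S U V : Set X} (hU : IsOpen U) (hV : IsOpen V) (hUV : Disjoint U V) (hS : S ⊆ U ∪ V)
    (hSU : IsPreconnected (S ∩ U)) (hSV : IsPreconnected (S ∩ V)) {x : X} (hx : x ∈ S) :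
    connectedComponentIn S x = S ∩ U ∨ connectedComponentIn S x = S ∩ V :=
  (hS hx).imp
    (fun hxU => connectedComponentIn_eq_inter_of_isPreconnected hU hV hUV hS hSU ⟨hx, hxU⟩)
    (fun hxV => connectedComponentIn_eq_inter_of_isPreconnected hV hU hUV.symm
      (union_comm U V ▸ hS) hSV ⟨hx, hxV⟩)

/-- Two connected components of an ambient wedge intersected with AdS: the set
`S = {x ∈ AdS : x₁ > |x₀|}` is the disjoint union of `W_R` and `W̃_R′` (in particular no
`x ∈ AdS` has `x₁ > |x₀|` and `xₙ = 0`); both wedges are nonempty, open in AdS and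
connected, and the connected components of `S` are exactly `W_R` and `W̃_R′`. -/
theorem ambient_wedge_two_components (n : ℕ) (hn : 2 ≤ n) :
    {x | x ∈ AdS n ∧ |x 0| < x 1} = WR n ∪ WtRp n ∧
    Disjoint (WR n) (WtRp n) ∧
    (∀ x ∈ AdS n, |x 0| < x 1 → x (Fin.last n) ≠ 0) ∧
    (WR n).Nonempty ∧ (WtRp n).Nonempty ∧
    IsOpen (Subtype.val ⁻¹' WR n : Set (AdS n)) ∧
    IsOpen (Subtype.val ⁻¹' WtRp n : Set (AdS n)) ∧
    IsConnected (WR n) ∧ IsConnected (WtRp n) ∧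
    (∀ x ∈ {x | x ∈ AdS n ∧ |x 0| < x 1},
      connectedComponentIn {x | x ∈ AdS n ∧ |x 0| < x 1} x = WR n ∨
      connectedComponentIn {x | x ∈ AdS n ∧ |x 0| < x 1} x = WtRp n) := by
  have hconnR := isConnected_WR n hn
  have hconnL := isConnected_WtRp n hn
  set U := {x : Fin (n + 1) → ℝ | 0 < x (Fin.last n)}
  set V := {x : Fin (n + 1) → ℝ | x (Fin.last n) < 0}
  have hU : IsOpen U := isOpen_lt continuous_const (continuous_apply _)
  have hV : IsOpen V := isOpen_lt (continuous_apply _) continuous_const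
  have hUV : Disjoint U V :=
    disjoint_left.mpr fun x (hxU : 0 < x _) (hxV : x _ < 0) => lt_asymm hxU hxV
  have hSUV : AdS n ∩ ambientWedge n ⊆ U ∪ V := fun x hx =>
    (last_ne_zero_of_mem_AdS n hn hx.1 hx.2).lt_or_gt.symm
  have hopen : ∀ t, IsOpen t → IsOpen ((↑) ⁻¹' (AdS n ∩ ambientWedge n ∩ t) : Set (AdS n)) :=
    fun t ht => by
      rw [inter_assoc, Subtype.preimage_coe_self_inter]
      exact ((isOpen_ambientWedge n).inter ht).preimage continuous_subtype_val
  have hS : {x | x ∈ AdS n ∧ |x 0| < x 1} = AdS n ∩ ambientWedge n := rfl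
  rw [hS]
  simp only [WR_eq_inter, WtRp_eq_inter] at hconnR hconnL ⊢
  exact ⟨by rw [← inter_union_distrib_left, inter_eq_left.mpr hSUV],
    hUV.mono inter_subset_right inter_subset_right, fun x => last_ne_zero_of_mem_AdS n hn,
    hconnR.nonempty, hconnL.nonempty, hopen U hU, hopen V hV, hconnR, hconnL,
    fun x hx => connectedComponentIn_eq_inter_or_eq_inter hU hV hUV hSUV
      hconnR.isPreconnected hconnL.isPreconnected hx⟩
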